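/- Let E be a real Hilbert space, T ≥ 1 a natural number, L > 0, and f : E → ℝ a differentiable function that is bounded below and whose gradient ∇f is L-Lipschitz. Fix a step size t with 0 < t < 2/(T·L). Suppose θ : ℕ → E, g : ℕ → Fin T → E, and v : ℕ → Fin T → E satisfy, for every k ∈ ℕ: (i) ∇f(θ_k) = ∑_i g_{k,i}; (ii) ⟪g_{k,i}, v_{k,j}⟫ ≥ 0 for all i ≠ j; (iii) ⟪g_{k,i}, v_{k,i}⟫ = ‖v_{k,i}‖² for all i; and (iv) θ_{k+1} = θ_k - t • ∑_i v_{k,i}. Then ∑_i ‖v_{k,i}‖² tends to 0 as k → ∞; in particular the GradOPS-modified gradients along the iteration converge to zero. -/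

import Mathlib

open scoped RealInnerProductSpace Gradient

/-- The descent lemma: if `∇ f` is `L`-Lipschitz, then
`f y ≤ f x + ⟪∇ f x, y - x⟫ + L / 2 * ‖y - x‖ ^ 2`. -/
lemma descent_lemma {E : Type*} [NormedAddCommGroup E] [InnerProductSpace ℝ E]
    [CompleteSpace E] {L : ℝ} (hL : 0 ≤ L) {f : E → ℝ} (hf : Differentiable ℝ f)
    (hlip : LipschitzWith (Real.toNNReal L) (∇ f)) (x y : E) :
    f y ≤ f x + ⟪∇ f x, y - x⟫ + L / 2 * ‖y - x‖ ^ 2 := by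
  set φ : ℝ → ℝ := fun s => f (x + s • (y - x)) with hφdef
  have hline : ∀ s : ℝ, HasDerivAt (fun s : ℝ => x + s • (y - x)) (y - x) s := by
    intro s
    simpa using ((hasDerivAt_id s).smul_const (y - x)).const_add x
  have hφ : ∀ s : ℝ, HasDerivAt φ (⟪∇ f (x + s • (y - x)), y - x⟫) s := by
    intro s
    have h1 : HasFDerivAt f
        (InnerProductSpace.toDual ℝ E (∇ f (x + s • (y - x)))) (x + s • (y - x)) :=
      ((hf (x + s • (y - x))).hasGradientAt).hasFDerivAt
    have := h1.comp_hasDerivAt s (hline s)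
    rw [InnerProductSpace.toDual_apply_apply] at this
    exact this
  have hcont : Continuous fun s : ℝ => ⟪∇ f (x + s • (y - x)), y - x⟫ := by
    apply Continuous.inner _ continuous_const
    exact hlip.continuous.comp (by continuity)
  have hint : ∫ s in (0:ℝ)..1, ⟪∇ f (x + s • (y - x)), y - x⟫ = φ 1 - φ 0 :=
    intervalIntegral.integral_eq_sub_of_hasDerivAt (fun s _ => hφ s)
      (hcont.intervalIntegrable 0 1)
  have hφ1 : φ 1 = f y := by simp [hφdef]
  have hφ0 : φ 0 = f x := by simp [hφdef]
  have hbound : ∀ s ∈ Set.Icc (0:ℝ) 1,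
      ⟪∇ f (x + s • (y - x)), y - x⟫ ≤ ⟪∇ f x, y - x⟫ + s * (L * ‖y - x‖ ^ 2) := by
    intro s hs
    have h3 : ⟪∇ f (x + s • (y - x)) - ∇ f x, y - x⟫ ≤
        ‖∇ f (x + s • (y - x)) - ∇ f x‖ * ‖y - x‖ := real_inner_le_norm _ _
    have h4 : ‖∇ f (x + s • (y - x)) - ∇ f x‖ ≤ L * (s * ‖y - x‖) := by
      have := hlip.dist_le_mul (x + s • (y - x)) x
      rw [dist_eq_norm, dist_eq_norm] at this
      calc ‖∇ f (x + s • (y - x)) - ∇ f x‖ ≤ L.toNNReal * ‖x + s • (y - x) - x‖ := this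
        _ = L * (s * ‖y - x‖) := by
            rw [Real.coe_toNNReal _ hL]
            congr 1
            rw [show x + s • (y - x) - x = s • (y - x) by abel, norm_smul]
            simp [abs_of_nonneg hs.1]
    have h5 : ⟪∇ f (x + s • (y - x)) - ∇ f x, y - x⟫ ≤ s * (L * ‖y - x‖ ^ 2) := by
      calc ⟪∇ f (x + s • (y - x)) - ∇ f x, y - x⟫ ≤
            ‖∇ f (x + s • (y - x)) - ∇ f x‖ * ‖y - x‖ := h3
        _ ≤ (L * (s * ‖y - x‖)) * ‖y - x‖ :=
            mul_le_mul_of_nonneg_right h4 (norm_nonneg _)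
        _ = s * (L * ‖y - x‖ ^ 2) := by ring
    have := inner_sub_left (𝕜 := ℝ) (∇ f (x + s • (y - x))) (∇ f x) (y - x)
    linarith [h5, this.symm.le, this.le]
  have hmono : ∫ s in (0:ℝ)..1, ⟪∇ f (x + s • (y - x)), y - x⟫ ≤
      ∫ s in (0:ℝ)..1, (⟪∇ f x, y - x⟫ + s * (L * ‖y - x‖ ^ 2)) := by
    apply intervalIntegral.integral_mono_on (by norm_num)
      (hcont.intervalIntegrable 0 1)
      ((by continuity : Continuous fun s : ℝ =>
        ⟪∇ f x, y - x⟫ + s * (L * ‖y - x‖ ^ 2)).intervalIntegrable 0 1)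
    exact hbound
  have hval : ∫ s in (0:ℝ)..1, (⟪∇ f x, y - x⟫ + s * (L * ‖y - x‖ ^ 2)) =
      ⟪∇ f x, y - x⟫ + L / 2 * ‖y - x‖ ^ 2 := by
    rw [intervalIntegral.integral_add (intervalIntegrable_const)
      (((by continuity : Continuous fun s : ℝ => s * (L * ‖y - x‖ ^ 2))).intervalIntegrable 0 1),
      intervalIntegral.integral_mul_const, integral_id,
      intervalIntegral.integral_const]
    norm_num
    ring
  have := hint ▸ hmono
  rw [hφ1, hφ0] at hint
  linarith [hval ▸ hmono, hint]

theorem stmt13 {E : Type*} [NormedAddCommGroup E] [InnerProductSpace ℝ E] [CompleteSpace E]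
    {T : ℕ} (hT : 1 ≤ T) (L : ℝ) (hL : 0 < L)
    (f : E → ℝ) (hf : Differentiable ℝ f)
    (hbdd : BddBelow (Set.range f))
    (hlip : LipschitzWith (Real.toNNReal L) (∇ f))
    (t : ℝ) (ht0 : 0 < t) (ht : t < 2 / (T * L))
    (θ : ℕ → E) (g v : ℕ → Fin T → E)
    (hgrad : ∀ k, ∇ f (θ k) = ∑ i, g k i)
    (h1 : ∀ k, ∀ i j : Fin T, i ≠ j → 0 ≤ ⟪g k i, v k j⟫)
    (h2 : ∀ k, ∀ i : Fin T, ⟪g k i, v k i⟫ = ‖v k i‖ ^ 2)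
    (hupd : ∀ k, θ (k + 1) = θ k - t • ∑ i, v k i) :
    Filter.Tendsto (fun k => ∑ i, ‖v k i‖ ^ 2) Filter.atTop (nhds 0) := by
  set S : ℕ → ℝ := fun k => ∑ i, ‖v k i‖ ^ 2 with hS
  have hSnn : ∀ k, 0 ≤ S k := fun k => Finset.sum_nonneg fun i _ => sq_nonneg _
  -- key inner product inequality
  have hinner : ∀ k, S k ≤ ⟪∇ f (θ k), ∑ i, v k i⟫ := by
    intro k
    rw [hgrad k, sum_inner]
    apply Finset.sum_le_sum
    intro i _
    rw [inner_sum]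
    have : ⟪g k i, v k i⟫ ≤ ∑ j, ⟪g k i, v k j⟫ :=
      Finset.single_le_sum (f := fun j => ⟪g k i, v k j⟫)
        (fun j _ => by
          rcases eq_or_ne i j with rfl | hij
          · rw [h2 k i]; positivity
          · exact h1 k i j hij) (Finset.mem_univ i)
    calc ‖v k i‖ ^ 2 = ⟪g k i, v k i⟫ := (h2 k i).symm
      _ ≤ ∑ j, ⟪g k i, v k j⟫ := this
  -- norm of the sum squared
  have hnormsq : ∀ k, ‖∑ i, v k i‖ ^ 2 ≤ T * S k := by
    intro k
    calc ‖∑ i, v k i‖ ^ 2 ≤ (∑ i, ‖v k i‖) ^ 2 := by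
          apply pow_le_pow_left₀ (norm_nonneg _) (norm_sum_le _ _)
      _ ≤ T * S k := by
          simpa using sq_sum_le_card_mul_sum_sq (s := Finset.univ)
            (f := fun i => ‖v k i‖)
  set c : ℝ := t - T * L * t ^ 2 / 2 with hc
  have hcpos : 0 < c := by
    have hTL : 0 < (T : ℝ) * L := by positivity
    have h2' : t * ((T : ℝ) * L) < 2 := (lt_div_iff₀ hTL).mp ht
    rw [hc]
    nlinarith [mul_pos ht0 (show (0:ℝ) < 2 - t * ((T : ℝ) * L) by linarith)]
  have hdescent : ∀ k, f (θ (k + 1)) ≤ f (θ k) - c * S k := by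
    intro k
    have hd := descent_lemma hL.le hf hlip (θ k) (θ (k + 1))
    rw [hupd k] at hd
    have hdiff : θ k - t • ∑ i, v k i - θ k = -(t • ∑ i, v k i) := by abel
    rw [hdiff] at hd
    have hi : ⟪∇ f (θ k), -(t • ∑ i, v k i)⟫ = -(t * ⟪∇ f (θ k), ∑ i, v k i⟫) := by
      rw [inner_neg_right, real_inner_smul_right]
    have hn : ‖-(t • ∑ i, v k i)‖ ^ 2 = t ^ 2 * ‖∑ i, v k i‖ ^ 2 := by
      rw [norm_neg, norm_smul]
      simp [abs_of_pos ht0, mul_pow]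
    rw [hi, hn] at hd
    have h6 := hinner k
    have h7 := hnormsq k
    have : L / 2 * (t ^ 2 * ‖∑ i, v k i‖ ^ 2) ≤ L / 2 * (t ^ 2 * (T * S k)) := by
      apply mul_le_mul_of_nonneg_left _ (by positivity)
      exact mul_le_mul_of_nonneg_left h7 (by positivity)
    rw [hupd k]
    have h8 : t * S k ≤ t * ⟪∇ f (θ k), ∑ i, v k i⟫ :=
      mul_le_mul_of_nonneg_left h6 ht0.le
    rw [hc]
    nlinarith [hd, this, h8]
  -- summability
  obtain ⟨B, hB⟩ := hbdd
  have hBle : ∀ x, B ≤ f x := fun x => hB (Set.mem_range_self x)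
  have hpartial : ∀ n, ∑ k ∈ Finset.range n, S k ≤ (f (θ 0) - B) / c := by
    intro n
    have htel : ∑ k ∈ Finset.range n, c * S k ≤ f (θ 0) - f (θ n) := by
      induction n with
      | zero => simp
      | succ n ih =>
          rw [Finset.sum_range_succ]
          have := hdescent n
          linarith
    have : c * ∑ k ∈ Finset.range n, S k ≤ f (θ 0) - B := by
      rw [Finset.mul_sum]
      linarith [htel, hBle (θ n)]
    rw [le_div_iff₀ hcpos]
    linarith [this]
  have hsum : Summable S :=
    summable_of_sum_range_le hSnn hpartial
  exact hsum.tendsto_atTop_zero
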